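/- Let P be a 2-neighborly simplicial d-polytope and let ω be an affine 1-stress on P. Then λ := ω² is an affine 2-stress on P, and for any vertex v in the support of ω, the partial derivative ∂λ/∂x_v = 2 ω_v ω is a nonzero scalar multiple of ω. Consequently, the linear span of {∂λ/∂x_v : v ∈ V(∂P), λ ∈ Stress_2(P)} contains Stress_1(P). -/

import Mathlib

open scoped Classical

noncomputable section

/-- The body of the polytope with vertex embedding `p`. -/
def body {V : Type} [Fintype V] {d : ℕ} (p : V → EuclideanSpace ℝ (Fin d)) :
    Set (EuclideanSpace ℝ (Fin d)) :=
  convexHull ℝ (Set.range p)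

/-- A finite vertex set `F` spans a proper (exposed) face of the polytope. -/
def IsBdryFace {V : Type} [Fintype V] {d : ℕ} (p : V → EuclideanSpace ℝ (Fin d))
    (F : Finset V) : Prop :=
  IsExposed ℝ (body p) (convexHull ℝ (p '' (F : Set V))) ∧
    convexHull ℝ (p '' (F : Set V)) ≠ body p

/-- `p` is the vertex embedding of a simplicial `d`-polytope: the points are distinct
extreme points, they affinely span `ℝ^d`, and every proper exposed face is the convex hull
of an affinely independent set of vertices (a geometric simplex). -/
structure IsSimplicialPolytope {V : Type} [Fintype V] {d : ℕ}
    (p : V → EuclideanSpace ℝ (Fin d)) : Prop where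
  inj : Function.Injective p
  spans : affineSpan ℝ (Set.range p) = ⊤
  vertex : ∀ v, p v ∈ Set.extremePoints ℝ (body p)
  simplicial : ∀ F : Set (EuclideanSpace ℝ (Fin d)), IsExposed ℝ (body p) F →
    F ≠ body p → ∃ W : Finset V,
      AffineIndependent ℝ (fun w : (W : Set V) => p w) ∧ F = convexHull ℝ (p '' W)

/-- The graph of the polytope: two vertices are adjacent iff they span a proper face. -/
def polyGraph {V : Type} [Fintype V] {d : ℕ} (p : V → EuclideanSpace ℝ (Fin d)) :
    SimpleGraph V where
  Adj a b := a ≠ b ∧ IsBdryFace p {a, b}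
  symm := by
    constructor
    intro a b h
    exact ⟨h.1.symm, by rw [Finset.pair_comm]; exact h.2⟩
  loopless := by constructor; intro a h; exact h.1 rfl
/-- The differential operator `∂_ℓ` associated to a linear form with coefficients `l`. -/
def Dop {V : Type} [Fintype V] (l : V → ℝ) (q : MvPolynomial V ℝ) : MvPolynomial V ℝ :=
  ∑ v : V, l v • MvPolynomial.pderiv v q

/-- The exponent vector of the squarefree monomial `∏_{v ∈ G} x_v`. -/
def sqFree {V : Type} (G : Finset V) : V →₀ ℕ :=
  ∑ v ∈ G, Finsupp.single v 1

/-- An affine `k`-stress on the simplicial polytope with vertex embedding `p`: a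
homogeneous degree-`k` polynomial, each of whose monomials is supported on a proper face,
annihilated by the `d` coordinate differential operators and the all-ones operator. -/
def IsPolyStress {V : Type} [Fintype V] {d : ℕ} (p : V → EuclideanSpace ℝ (Fin d))
    (k : ℕ) (lam : MvPolynomial V ℝ) : Prop :=
  lam.IsHomogeneous k ∧
  (∀ m ∈ lam.support, IsBdryFace p m.support) ∧
  (∀ i : Fin d, Dop (fun v => p v i) lam = 0) ∧
  Dop (fun _ => (1 : ℝ)) lam = 0

/-!
An affine 1-stress `ω` is a linear form `∑ ω_v x_v`, so `∂_v ω` is the constant `ω_v` and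
`∂_v (ω²) = 2 ω_v ω`; dividing by `2 ω_v` recovers `ω` from a partial derivative of `ω²`.
Each `∂_θ` is a derivation, so it kills `ω² = ω · ω` as soon as it kills `ω`. A monomial
`x_u x_w` of `ω²` is supported on `{u, w}`: an edge by 2-neighborliness when `u ≠ w`, and a
vertex when `u = w`. A vertex is an exposed face because extreme points of a polytope are
exposed (separate `p v` from the hull of the other vertices), and it is a proper face because
`∑ ω_w = 0` with `ω_v ≠ 0` forces a second vertex.
-/

theorem Set.Finite.extremePoints_convexHull_subset_exposedPoints {E : Type*}
    [TopologicalSpace E] [AddCommGroup E] [Module ℝ E] [IsTopologicalAddGroup E]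
    [ContinuousSMul ℝ E] [LocallyConvexSpace ℝ E] [T2Space E] {s : Set E} (hs : s.Finite) :
    (convexHull ℝ s).extremePoints ℝ ⊆ (convexHull ℝ s).exposedPoints ℝ := by
  intro x hx
  have hxs : x ∈ s := extremePoints_convexHull_subset hx
  have hxK : x ∉ convexHull ℝ (s \ {x}) := fun hxK =>
    ((convex_convexHull ℝ s).mem_extremePoints_iff_mem_sdiff_convexHull_sdiff.1 hx).2
      (convexHull_mono (Set.sdiff_subset_sdiff_left (subset_convexHull ℝ s)) hxK)
  obtain ⟨f, u, hfK, hfx⟩ := geometric_hahn_banach_closed_point (convex_convexHull ℝ _)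
    (hs.sdiff.isCompact_convexHull ℝ).isClosed hxK
  have hsep : ∀ y ∈ convexHull ℝ s, y = x ∨ f y < f x := by
    intro y hy
    rw [← Set.insert_eq_of_mem hxs, ← Set.insert_sdiff_singleton] at hy
    rcases (s \ {x}).eq_empty_or_nonempty with hK | hK
    · rw [hK, insert_empty_eq, convexHull_singleton] at hy
      exact Or.inl hy
    rw [convexHull_insert hK, convexJoin_singleton_left, Set.mem_iUnion₂] at hy
    obtain ⟨k, hk, a, b, ha, hb, hab, rfl⟩ := hy
    rcases hb.eq_or_lt with rfl | hb
    · left; simp [show a = 1 by linarith]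
    · right
      have hfk : f k < f x := (hfK k hk).trans hfx
      have hsum : a * f x + b * f x = f x := by rw [← add_mul, hab, one_mul]
      simp only [map_add, map_smul, smul_eq_mul]
      linarith [mul_lt_mul_of_pos_left hfk hb]
  refine ⟨subset_convexHull ℝ s hxs, f, fun y hy => ?_⟩
  rcases hsep y hy with rfl | hlt
  · exact ⟨le_rfl, fun _ => rfl⟩
  · exact ⟨hlt.le, fun hle => absurd hle hlt.not_ge⟩

namespace MvPolynomial

variable {σ R : Type*} [CommSemiring R] {φ : MvPolynomial σ R}

theorem IsHomogeneous.exists_eq_single_of_mem_support (hφ : φ.IsHomogeneous 1)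
    {m : σ →₀ ℕ} (hm : m ∈ φ.support) : ∃ u, m = Finsupp.single u 1 := by
  have hdeg : m ∈ {d : σ →₀ ℕ | d.degree = 1} := by
    rw [Set.mem_ofPred_eq, Finsupp.degree_eq_weight_one]
    exact hφ (mem_support_iff.1 hm)
  obtain ⟨u, hu⟩ := Finsupp.range_single_one.symm ▸ hdeg
  exact ⟨u, hu.symm⟩

theorem IsHomogeneous.pderiv_eq_C (hφ : φ.IsHomogeneous 1) (v : σ) :
    pderiv v φ = C (φ.coeff (Finsupp.single v 1)) := by
  have hconst : (pderiv v φ).totalDegree = 0 := (totalDegree_zero_iff_isHomogeneous _).2 hφ.pderiv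
  rw [totalDegree_eq_zero_iff_eq_C.1 hconst, coeff_pderiv, zero_add]
  simp

theorem IsHomogeneous.pderiv_sq (hφ : φ.IsHomogeneous 1) (v : σ) :
    pderiv v (φ ^ 2) = (2 * φ.coeff (Finsupp.single v 1)) • φ := by
  rw [pderiv_pow, hφ.pderiv_eq_C, smul_eq_C_mul, map_mul, map_ofNat]
  ring

end MvPolynomial

theorem Finsupp.support_single_one_add_single_one {α : Type*} [DecidableEq α] (a b : α) :
    (Finsupp.single a 1 + Finsupp.single b 1 : α →₀ ℕ).support = {a, b} := by
  rcases eq_or_ne a b with rfl | hab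
  · rw [← Finsupp.single_add, Finsupp.support_single _ two_ne_zero, Finset.pair_eq_singleton]
  · rw [Finsupp.support_add_eq (Finsupp.support_single_disjoint one_ne_zero one_ne_zero |>.2 hab),
      Finsupp.support_single _ one_ne_zero, Finsupp.support_single _ one_ne_zero]
    exact (Finset.insert_eq a {b}).symm

section Dop

variable {V : Type} [Fintype V]

theorem Dop_mul (l : V → ℝ) (f g : MvPolynomial V ℝ) :
    Dop l (f * g) = f * Dop l g + g * Dop l f := by
  simp only [Dop, MvPolynomial.pderiv_mul, smul_add, Finset.sum_add_distrib, Finset.mul_sum,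
    mul_smul_comm, mul_comm (MvPolynomial.pderiv _ f) g]
  rw [add_comm]

theorem Dop_sq_eq_zero {l : V → ℝ} {f : MvPolynomial V ℝ} (hf : Dop l f = 0) :
    Dop l (f ^ 2) = 0 := by
  rw [sq, Dop_mul, hf, mul_zero, add_zero]

theorem Dop_eq_C_of_isHomogeneous_one (l : V → ℝ) {f : MvPolynomial V ℝ}
    (hf : f.IsHomogeneous 1) :
    Dop l f = MvPolynomial.C (∑ v, l v * f.coeff (Finsupp.single v 1)) := by
  simp only [Dop, hf.pderiv_eq_C, MvPolynomial.smul_eq_C_mul, ← map_mul, map_sum]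

end Dop

theorem IsSimplicialPolytope.isBdryFace_singleton {V : Type} [Fintype V] {d : ℕ}
    {p : V → EuclideanSpace ℝ (Fin d)} (hP : IsSimplicialPolytope p) {v w : V} (hwv : w ≠ v) :
    IsBdryFace p {v} := by
  have hface : convexHull ℝ (p '' (({v} : Finset V) : Set V)) = {p v} := by
    rw [Finset.coe_singleton, Set.image_singleton, convexHull_singleton]
  rw [IsBdryFace, hface, ← mem_exposedPoints_iff_exposed_singleton]
  refine ⟨(Set.finite_range p).extremePoints_convexHull_subset_exposedPoints (hP.vertex v),
    fun hbody => hwv (hP.inj ?_)⟩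
  rw [← Set.mem_singleton_iff, hbody]
  exact subset_convexHull ℝ _ ⟨w, rfl⟩

namespace IsPolyStress

variable {V : Type} [Fintype V] {d : ℕ} {p : V → EuclideanSpace ℝ (Fin d)}
  {ω : MvPolynomial V ℝ}

theorem exists_ne (hω : IsPolyStress p 1 ω) {v : V}
    (hv : ω.coeff (Finsupp.single v 1) ≠ 0) : ∃ w, w ≠ v := by
  by_contra! hV
  have hsum := hω.2.2.2
  rw [Dop_eq_C_of_isHomogeneous_one _ hω.1, MvPolynomial.C_eq_zero,
    Fintype.sum_eq_single v fun w hw => absurd (hV w) hw, one_mul] at hsum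
  exact hv hsum

theorem sq (hP : IsSimplicialPolytope p)
    (hneigh : ∀ S : Finset V, S.card = 2 → IsBdryFace p S) (hω : IsPolyStress p 1 ω) :
    IsPolyStress p 2 (ω ^ 2) := by
  obtain ⟨hhom, -, hcoord, hones⟩ := id hω
  refine ⟨by simpa only [pow_two] using hhom.mul hhom, ?_, fun i => Dop_sq_eq_zero (hcoord i),
    Dop_sq_eq_zero hones⟩
  intro m hm
  rw [pow_two] at hm
  obtain ⟨a, ha, b, hb, rfl⟩ := Finset.mem_add.1 (MvPolynomial.support_mul ω ω hm)
  obtain ⟨u, rfl⟩ := hhom.exists_eq_single_of_mem_support ha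
  obtain ⟨w, rfl⟩ := hhom.exists_eq_single_of_mem_support hb
  rw [Finsupp.support_single_one_add_single_one]
  rcases eq_or_ne u w with rfl | huw
  · obtain ⟨w, hw⟩ := hω.exists_ne (MvPolynomial.mem_support_iff.1 ha)
    rw [Finset.pair_eq_singleton]
    exact hP.isBdryFace_singleton hw
  · exact hneigh _ (Finset.card_pair huw)

theorem mem_span_pderiv_stress (hP : IsSimplicialPolytope p)
    (hneigh : ∀ S : Finset V, S.card = 2 → IsBdryFace p S) (hω : IsPolyStress p 1 ω) :
    ω ∈ Submodule.span ℝ {q : MvPolynomial V ℝ |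
      ∃ (v : V) (lam : MvPolynomial V ℝ), IsPolyStress p 2 lam ∧
        q = MvPolynomial.pderiv v lam} := by
  rcases eq_or_ne ω 0 with rfl | hω0
  · exact Submodule.zero_mem _
  obtain ⟨m, hm⟩ := MvPolynomial.support_nonempty.2 hω0
  obtain ⟨v, rfl⟩ := hω.1.exists_eq_single_of_mem_support hm
  have hc : 2 * ω.coeff (Finsupp.single v 1) ≠ 0 :=
    mul_ne_zero two_ne_zero (MvPolynomial.mem_support_iff.1 hm)
  have hω_eq :
      ω = (2 * ω.coeff (Finsupp.single v 1))⁻¹ • MvPolynomial.pderiv v (ω ^ 2) := by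
    rw [hω.1.pderiv_sq, smul_smul, inv_mul_cancel₀ hc, one_smul]
  rw [hω_eq]
  exact Submodule.smul_mem _ _ (Submodule.subset_span ⟨v, ω ^ 2, hω.sq hP hneigh, rfl⟩)

end IsPolyStress

/-- for a 2-neighborly simplicial `d`-polytope `P` and an affine 1-stress
`ω` on `P`, `λ = ω²` is an affine 2-stress; for every vertex `v` in the support of `ω`,
`∂λ/∂x_v = 2 ω_v ω` is a nonzero multiple of `ω`; consequently `Stress₁(P)` is contained in
the span of the partial derivatives of affine 2-stresses. -/
theorem stmt18 {V : Type} [Fintype V] {d : ℕ}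
    (p : V → EuclideanSpace ℝ (Fin d)) (hP : IsSimplicialPolytope p)
    (hneigh : ∀ S : Finset V, S.card = 2 → IsBdryFace p S)
    (ω : MvPolynomial V ℝ) (hω : IsPolyStress p 1 ω) :
    IsPolyStress p 2 (ω ^ 2) ∧
    (∀ v : V, ω.coeff (Finsupp.single v 1) ≠ 0 →
      MvPolynomial.pderiv v (ω ^ 2) = (2 * ω.coeff (Finsupp.single v 1)) • ω) ∧
    {q : MvPolynomial V ℝ | IsPolyStress p 1 q} ⊆
      ↑(Submodule.span ℝ {q : MvPolynomial V ℝ |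
        ∃ (v : V) (lam : MvPolynomial V ℝ), IsPolyStress p 2 lam ∧
          q = MvPolynomial.pderiv v lam}) :=
  ⟨hω.sq hP hneigh, fun v _ => hω.1.pderiv_sq v,
    fun _ hq => IsPolyStress.mem_span_pderiv_stress hP hneigh hq⟩
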